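/- Let μ ∈ (−1, 1), μ ≠ 0, and set Φ(r) = Σ_{k≥0} (r²/4)^k / (((μ+2)/2)_k ((μ+3)/2)_k) (so Φ(r) = φ_0(i r) > 0 for r > 0). Then the function r ↦ (μ + 1/2) + r·Φ'(r)/Φ(r), which equals i r·s_{μ−1/2,1/2}'(i r)/s_{μ−1/2,1/2}(i r), is increasing on (0, ∞) and tends to μ + 1/2 as r → 0⁺. Consequently, for μ ∈ (−1, −1/2) and α ∈ [0, 1), the equation (μ + 1/2) + r·Φ'(r)/Φ(r) = α(μ + 1/2) has exactly one root in (0, ∞). -/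

import Mathlib

open scoped BigOperators

/-- The Pochhammer symbol `(a)_k = a (a+1) ⋯ (a+k-1)`. -/
noncomputable def poch (a : ℝ) (k : ℕ) : ℝ := ∏ i ∈ Finset.range k, (a + i)

/-- `Φ(r) = φ₀(i r) = Σ_{k≥0} (r²/4)^k / (((μ+2)/2)_k ((μ+3)/2)_k)`. -/
noncomputable def PhiR (μ : ℝ) (x : ℝ) : ℝ :=
  ∑' k : ℕ, (x ^ 2 / 4) ^ k / (poch ((μ + 2) / 2) k * poch ((μ + 3) / 2) k)

/-! Write `Φ(r) = g(r²/4)` with `g(t) = ∑ c_k t^k`, `c_k = 1/((a)_k (b)_k) > 0`. Then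
`r Φ'(r)/Φ(r) = 2 t g'(t)/g(t)`, and `t g'(t)/g(t)` is the mean of `k` under the weights
`c_k t^k`. It is strictly increasing in `t`: for `t < s` the difference `N(s) g(t) - N(t) g(s)`
(with `N = t g'`) is a double series which, symmetrised in `(k, j)`, has the nonnegative terms
`(k - j) c_k c_j (s^k t^j - s^j t^k)`, the one at `(1, 0)` being positive (Chebyshev's sum
inequality). The mean vanishes at `t = 0` and exceeds `1/2` once `g(t) ≥ 2 c_0` (because
`N ≥ g - c_0`), so the root comes from the intermediate value theorem. -/

open Filter Topology Set

lemma HasSum.pos_of_add_swap {ι : Type*} {D : ι × ι → ℝ} {a : ℝ} (h : HasSum D a)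
    (hnn : ∀ p, 0 ≤ D p + D p.swap) (p₀ : ι × ι) (hp₀ : 0 < D p₀ + D p₀.swap) :
    0 < a := by
  have hsym : HasSum (fun p => D p + D p.swap) (a + a) :=
    h.add ((Equiv.prodComm ι ι).hasSum_iff.2 h)
  linarith [hasSum_lt (f := fun _ => 0) (fun p => hnn p) hp₀ hasSum_zero hsym]

lemma existsUnique_eq_of_strictMonoOn {s : Set ℝ} {f : ℝ → ℝ} {y : ℝ}
    (hs : IsPreconnected s) (hf : ContinuousOn f s) (hmono : StrictMonoOn f s)
    (hlo : ∃ a ∈ s, f a ≤ y) (hhi : ∃ b ∈ s, y ≤ f b) : ∃! x, x ∈ s ∧ f x = y := by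
  obtain ⟨a, ha, hay⟩ := hlo
  obtain ⟨b, hb, hyb⟩ := hhi
  obtain ⟨x, hx, hxy⟩ := hs.intermediate_value ha hb hf ⟨hay, hyb⟩
  exact ⟨x, ⟨hx, hxy⟩, fun x' ⟨hx', hx'y⟩ => hmono.injOn hx' hx (hx'y.trans hxy.symm)⟩

lemma sub_mul_pow_mul_pow_sub_nonneg {s t : ℝ} (ht : 0 ≤ t) (hts : t ≤ s) (k j : ℕ) :
    0 ≤ ((k : ℝ) - j) * (s ^ k * t ^ j - s ^ j * t ^ k) := by
  have key : ∀ {k j : ℕ}, j ≤ k → s ^ j * t ^ k ≤ s ^ k * t ^ j := by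
    intro k j hjk
    obtain ⟨m, rfl⟩ := Nat.exists_eq_add_of_le hjk
    calc s ^ j * t ^ (j + m) = s ^ j * t ^ j * t ^ m := by ring
      _ ≤ s ^ j * t ^ j * s ^ m :=
        mul_le_mul_of_nonneg_left (pow_le_pow_left₀ ht hts m)
          (mul_nonneg (pow_nonneg (ht.trans hts) j) (pow_nonneg ht j))
      _ = s ^ (j + m) * t ^ j := by ring
  rcases le_total j k with hjk | hkj
  · exact mul_nonneg (sub_nonneg.2 (by exact_mod_cast hjk)) (sub_nonneg.2 (key hjk))
  · exact mul_nonneg_of_nonpos_of_nonpos (sub_nonpos.2 (by exact_mod_cast hkj))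
      (sub_nonpos.2 (key hkj))

noncomputable def seriesEval (c : ℕ → ℝ) (t : ℝ) : ℝ := ∑' k, c k * t ^ k

noncomputable def seriesMean (c : ℕ → ℝ) (t : ℝ) : ℝ :=
  seriesEval (fun k => k * c k) t / seriesEval c t

lemma seriesEval_zero (c : ℕ → ℝ) : seriesEval c 0 = c 0 := by
  rw [seriesEval, tsum_eq_single 0 fun k hk => by simp [hk]]
  simp

lemma seriesMean_zero (c : ℕ → ℝ) : seriesMean c 0 = 0 := by
  simp [seriesMean, seriesEval_zero]

structure IsNonnegEntire (c : ℕ → ℝ) : Prop where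
  nonneg : ∀ k, 0 ≤ c k
  summable : ∀ t : ℝ, 0 ≤ t → Summable fun k => c k * t ^ k

namespace IsNonnegEntire

variable {c : ℕ → ℝ} {s t : ℝ}

lemma term_nonneg (hc : IsNonnegEntire c) (ht : 0 ≤ t) (k : ℕ) : 0 ≤ c k * t ^ k :=
  mul_nonneg (hc.nonneg k) (pow_nonneg ht k)

lemma hasSum (hc : IsNonnegEntire c) (ht : 0 ≤ t) :
    HasSum (fun k => c k * t ^ k) (seriesEval c t) :=
  (hc.summable t ht).hasSum

lemma natCast_mul (hc : IsNonnegEntire c) : IsNonnegEntire fun k => k * c k where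
  nonneg k := mul_nonneg k.cast_nonneg (hc.nonneg k)
  summable t ht := by
    refine (hc.summable (2 * t) (by positivity)).of_nonneg_of_le
      (fun k => mul_nonneg (mul_nonneg k.cast_nonneg (hc.nonneg k)) (pow_nonneg ht k))
      fun k => ?_
    have hk : (k : ℝ) ≤ 2 ^ k := by exact_mod_cast Nat.lt_two_pow_self.le
    calc (k : ℝ) * c k * t ^ k = k * (c k * t ^ k) := by ring
      _ ≤ 2 ^ k * (c k * t ^ k) := by gcongr; exact hc.term_nonneg ht k
      _ = c k * (2 * t) ^ k := by ring

lemma hasDerivAt (hc : IsNonnegEntire c) (t : ℝ) :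
    HasDerivAt (seriesEval c) (∑' k, k * c k * t ^ (k - 1)) t := by
  set R := |t| + 1
  have hR : 0 < R := by positivity
  have hu : Summable fun k : ℕ => k * c k * R ^ (k - 1) := by
    refine (summable_mul_right_iff hR.ne').1 ((hc.natCast_mul.summable R hR.le).congr fun k => ?_)
    rcases k with _ | k
    · simp
    · simp only [Nat.add_sub_cancel, pow_succ]; ring
  refine hasDerivAt_tsum_of_isPreconnected (g := fun k y => c k * y ^ k)
    (g' := fun k y => k * c k * y ^ (k - 1)) hu Metric.isOpen_ball
    (convex_ball (0 : ℝ) R).isPreconnected (fun k y _ => ?_) (fun k y hy => ?_)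
    (Metric.mem_ball_self hR) (hc.summable 0 le_rfl) ?_
  · exact ((hasDerivAt_pow k y).const_mul (c k)).congr_deriv (by ring)
  · rw [mem_ball_zero_iff, Real.norm_eq_abs] at hy
    rw [norm_mul, norm_mul, Real.norm_natCast, Real.norm_of_nonneg (hc.nonneg k), norm_pow,
      Real.norm_eq_abs]
    gcongr
    exact mul_nonneg k.cast_nonneg (hc.nonneg k)
  · rw [mem_ball_zero_iff, Real.norm_eq_abs]
    exact lt_add_one _

lemma differentiable (hc : IsNonnegEntire c) : Differentiable ℝ (seriesEval c) :=
  fun t => (hc.hasDerivAt t).differentiableAt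

lemma mul_deriv (hc : IsNonnegEntire c) (t : ℝ) :
    t * deriv (seriesEval c) t = seriesEval (fun k => k * c k) t := by
  rw [(hc.hasDerivAt t).deriv, ← tsum_mul_left, seriesEval]
  congr 1 with k
  rcases k with _ | k
  · simp
  · simp only [Nat.add_sub_cancel, pow_succ]; ring

lemma seriesEval_pos (hc : IsNonnegEntire c) (h₀ : 0 < c 0) (ht : 0 ≤ t) :
    0 < seriesEval c t :=
  (hc.summable t ht).tsum_pos (hc.term_nonneg ht) 0 (by simpa using h₀)

lemma add_mul_le_seriesEval (hc : IsNonnegEntire c) (ht : 0 ≤ t) :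
    c 0 + c 1 * t ≤ seriesEval c t := by
  have := (hc.summable t ht).sum_le_tsum (Finset.range 2) fun k _ => hc.term_nonneg ht k
  simpa [Finset.sum_range_succ, seriesEval] using this

lemma seriesEval_sub_le (hc : IsNonnegEntire c) (ht : 0 ≤ t) :
    seriesEval c t - c 0 ≤ seriesEval (fun k => k * c k) t := by
  rw [seriesEval, seriesEval, (hc.summable t ht).tsum_eq_zero_add,
    (hc.natCast_mul.summable t ht).tsum_eq_zero_add]
  simp only [pow_zero, mul_one, CharP.cast_eq_zero, zero_mul, add_sub_cancel_left, zero_add]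
  refine Summable.tsum_le_tsum (fun k => ?_) ((summable_nat_add_iff 1).2 (hc.summable t ht))
    ((summable_nat_add_iff 1).2 (hc.natCast_mul.summable t ht))
  have := hc.term_nonneg ht (k + 1)
  have hk : (1 : ℝ) ≤ (k + 1 : ℕ) := by exact_mod_cast Nat.le_add_left 1 k
  nlinarith

lemma hasSum_sub_mul_mul (hc : IsNonnegEntire c) (ht : 0 ≤ t) (hs : 0 ≤ s) :
    HasSum (fun p : ℕ × ℕ => ((p.1 : ℝ) - p.2) * (c p.1 * s ^ p.1) * (c p.2 * t ^ p.2))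
      (seriesEval (fun k => k * c k) s * seriesEval c t -
        seriesEval (fun k => k * c k) t * seriesEval c s) := by
  have hN := hc.natCast_mul
  have hst := (hN.hasSum hs).mul (hc.hasSum ht)
    ((hN.summable s hs).mul_of_nonneg (hc.summable t ht) (hN.term_nonneg hs) (hc.term_nonneg ht))
  have hts : HasSum (fun p : ℕ × ℕ => (p.2 : ℝ) * c p.2 * t ^ p.2 * (c p.1 * s ^ p.1))
      (seriesEval (fun k => k * c k) t * seriesEval c s) :=
    (Equiv.prodComm ℕ ℕ).hasSum_iff.2 <| (hN.hasSum ht).mul (hc.hasSum hs)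
      ((hN.summable t ht).mul_of_nonneg (hc.summable s hs) (hN.term_nonneg ht) (hc.term_nonneg hs))
  rw [show (fun p : ℕ × ℕ => ((p.1 : ℝ) - p.2) * (c p.1 * s ^ p.1) * (c p.2 * t ^ p.2)) =
    fun p => p.1 * c p.1 * s ^ p.1 * (c p.2 * t ^ p.2) - p.2 * c p.2 * t ^ p.2 * (c p.1 * s ^ p.1)
    from funext fun p => by ring]
  exact hst.sub hts

lemma mul_lt_mul_seriesEval (hc : IsNonnegEntire c) (h₀ : 0 < c 0) (h₁ : 0 < c 1)
    (ht : 0 ≤ t) (hts : t < s) :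
    seriesEval (fun k => k * c k) t * seriesEval c s <
      seriesEval (fun k => k * c k) s * seriesEval c t := by
  have hsym : ∀ k j : ℕ,
      ((k : ℝ) - j) * (c k * s ^ k) * (c j * t ^ j) +
          ((j : ℝ) - k) * (c j * s ^ j) * (c k * t ^ k) =
        c k * c j * (((k : ℝ) - j) * (s ^ k * t ^ j - s ^ j * t ^ k)) := fun k j => by ring
  refine sub_pos.1 ((hc.hasSum_sub_mul_mul ht (ht.trans hts.le)).pos_of_add_swap
    (fun ⟨k, j⟩ => ?_) (1, 0) ?_)
  · rw [Prod.swap_prod_mk, hsym]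
    exact mul_nonneg (mul_nonneg (hc.nonneg k) (hc.nonneg j))
      (sub_mul_pow_mul_pow_sub_nonneg ht hts.le k j)
  · rw [Prod.swap_prod_mk, hsym]
    simpa using mul_pos (mul_pos h₁ h₀) (sub_pos.2 hts)

lemma strictMonoOn_seriesMean (hc : IsNonnegEntire c) (h₀ : 0 < c 0) (h₁ : 0 < c 1) :
    StrictMonoOn (seriesMean c) (Ici 0) := fun t ht s hs hts => by
  rw [seriesMean, seriesMean,
    div_lt_div_iff₀ (hc.seriesEval_pos h₀ ht) (hc.seriesEval_pos h₀ hs)]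
  exact hc.mul_lt_mul_seriesEval h₀ h₁ ht hts

lemma continuousOn_seriesMean (hc : IsNonnegEntire c) (h₀ : 0 < c 0) :
    ContinuousOn (seriesMean c) (Ici 0) :=
  hc.natCast_mul.differentiable.continuous.continuousOn.div
    hc.differentiable.continuous.continuousOn fun _ ht => (hc.seriesEval_pos h₀ ht).ne'

lemma eventually_half_le_seriesMean (hc : IsNonnegEntire c) (h₀ : 0 < c 0) (h₁ : 0 < c 1) :
    ∀ᶠ t in atTop, 1 / 2 ≤ seriesMean c t := by
  filter_upwards [eventually_ge_atTop (c 0 / c 1), eventually_ge_atTop 0] with t ht ht₀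
  have hg := hc.add_mul_le_seriesEval ht₀
  have hN := hc.seriesEval_sub_le ht₀
  have h1t : c 0 ≤ c 1 * t := by rwa [div_le_iff₀' h₁] at ht
  rw [seriesMean, le_div_iff₀ (hc.seriesEval_pos h₀ ht₀)]
  linarith

end IsNonnegEntire

noncomputable def pochCoeff (a b : ℝ) (k : ℕ) : ℝ := (poch a k * poch b k)⁻¹

section pochCoeff

variable {a b : ℝ}

lemma poch_pos (ha : 0 < a) (k : ℕ) : 0 < poch a k :=
  Finset.prod_pos fun i _ => by positivity

lemma pochCoeff_pos (ha : 0 < a) (hb : 0 < b) (k : ℕ) : 0 < pochCoeff a b k :=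
  inv_pos.2 (mul_pos (poch_pos ha k) (poch_pos hb k))

lemma pochCoeff_succ (a b : ℝ) (k : ℕ) :
    pochCoeff a b (k + 1) = pochCoeff a b k * ((a + k) * (b + k))⁻¹ := by
  simp only [pochCoeff, poch, Finset.prod_range_succ, mul_inv]
  ring

lemma isNonnegEntire_pochCoeff (ha : 0 < a) (hb : 0 < b) : IsNonnegEntire (pochCoeff a b) where
  nonneg k := (pochCoeff_pos ha hb k).le
  summable t ht := by
    have hgrow : Tendsto (fun k : ℕ => (a + k) * (b + k)) atTop atTop :=
      (tendsto_atTop_add_const_left _ a tendsto_natCast_atTop_atTop).atTop_mul_atTop₀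
        (tendsto_atTop_add_const_left _ b tendsto_natCast_atTop_atTop)
    have hratio : Tendsto (fun k : ℕ => t * ((a + k) * (b + k))⁻¹) atTop (𝓝 0) := by
      simpa using tendsto_const_nhds.mul (tendsto_inv_atTop_zero.comp hgrow)
    refine summable_of_ratio_norm_eventually_le (r := 1 / 2) (by norm_num) ?_
    filter_upwards [hratio.eventually (ge_mem_nhds (by norm_num : (0 : ℝ) < 1 / 2))] with k hk
    rw [pochCoeff_succ, show pochCoeff a b k * ((a + k) * (b + k))⁻¹ * t ^ (k + 1)
      = t * ((a + k) * (b + k))⁻¹ * (pochCoeff a b k * t ^ k) by ring, norm_mul,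
      Real.norm_of_nonneg (by positivity)]
    exact mul_le_mul_of_nonneg_right hk (norm_nonneg _)

end pochCoeff

lemma PhiR_eq_seriesEval (μ : ℝ) :
    PhiR μ = fun r => seriesEval (pochCoeff ((μ + 2) / 2) ((μ + 3) / 2)) (r ^ 2 / 4) := by
  ext r
  exact tsum_congr fun k => by rw [pochCoeff, div_eq_inv_mul]

lemma mul_deriv_PhiR_div {μ : ℝ} (hμ : -2 < μ) (r : ℝ) :
    r * deriv (PhiR μ) r / PhiR μ r =
      2 * seriesMean (pochCoeff ((μ + 2) / 2) ((μ + 3) / 2)) (r ^ 2 / 4) := by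
  set c := pochCoeff ((μ + 2) / 2) ((μ + 3) / 2)
  have hc : IsNonnegEntire c := isNonnegEntire_pochCoeff (by linarith) (by linarith)
  have hderiv : deriv (PhiR μ) r = deriv (seriesEval c) (r ^ 2 / 4) * (r / 2) := by
    rw [PhiR_eq_seriesEval]
    have := (hc.differentiable _).hasDerivAt.comp r ((hasDerivAt_pow 2 r).div_const 4)
    exact this.deriv.trans (by ring)
  rw [hderiv, PhiR_eq_seriesEval, seriesMean, ← hc.mul_deriv]
  ring

theorem Phi_logderiv_increasing_general (μ : ℝ) (hμ : μ ∈ Set.Ioo (-1 : ℝ) 1) :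
    StrictMonoOn (fun r : ℝ => (μ + 1 / 2) + r * deriv (PhiR μ) r / PhiR μ r)
      (Set.Ioi (0 : ℝ)) ∧
    Filter.Tendsto (fun r : ℝ => (μ + 1 / 2) + r * deriv (PhiR μ) r / PhiR μ r)
      (nhdsWithin 0 (Set.Ioi (0 : ℝ))) (nhds (μ + 1 / 2)) ∧
    (∀ α : ℝ, μ ∈ Set.Ioo (-1 : ℝ) (-(1 : ℝ) / 2) → α ∈ Set.Ico (0 : ℝ) 1 →
      ∃! r : ℝ, 0 < r ∧
        (μ + 1 / 2) + r * deriv (PhiR μ) r / PhiR μ r = α * (μ + 1 / 2)) := by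
  set c := pochCoeff ((μ + 2) / 2) ((μ + 3) / 2)
  have ha : 0 < (μ + 2) / 2 := by linarith [hμ.1]
  have hb : 0 < (μ + 3) / 2 := by linarith [hμ.1]
  have hc : IsNonnegEntire c := isNonnegEntire_pochCoeff ha hb
  have hpos : ∀ k, 0 < c k := pochCoeff_pos ha hb
  simp only [mul_deriv_PhiR_div (show -2 < μ by linarith [hμ.1])]
  have hcont : Continuous fun r : ℝ => (μ + 1 / 2) + 2 * seriesMean c (r ^ 2 / 4) :=
    continuous_const.add <| continuous_const.mul <|
      (hc.continuousOn_seriesMean (hpos 0)).comp_continuous (by fun_prop) fun r => by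
        simp only [mem_Ici]; positivity
  have hmono : StrictMonoOn (fun r : ℝ => (μ + 1 / 2) + 2 * seriesMean c (r ^ 2 / 4)) (Ioi 0) :=
    fun r (hr : 0 < r) r' _ hrr' => by
      have := hc.strictMonoOn_seriesMean (hpos 0) (hpos 1)
        (mem_Ici.2 (by positivity : 0 ≤ r ^ 2 / 4)) (mem_Ici.2 (by positivity : 0 ≤ r' ^ 2 / 4))
        (by gcongr)
      dsimp only
      linarith
  have hlim : Tendsto (fun r : ℝ => (μ + 1 / 2) + 2 * seriesMean c (r ^ 2 / 4))
      (𝓝[>] 0) (𝓝 (μ + 1 / 2)) := by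
    simpa [seriesMean_zero] using (hcont.tendsto 0).mono_left nhdsWithin_le_nhds
  refine ⟨hmono, hlim, fun α hμ' hα => ?_⟩
  have hneg : μ + 1 / 2 < 0 := by linarith [hμ'.2]
  refine existsUnique_eq_of_strictMonoOn isPreconnected_Ioi hcont.continuousOn hmono ?_ ?_
  · have hlt : μ + 1 / 2 < α * (μ + 1 / 2) := by nlinarith [hα.2]
    obtain ⟨r, hr, hr₀⟩ :=
      ((hlim.eventually (gt_mem_nhds hlt)).and self_mem_nhdsWithin).exists
    exact ⟨r, hr₀, hr.le⟩
  · have hsq : Tendsto (fun r : ℝ => r ^ 2 / 4) atTop atTop :=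
      (tendsto_pow_atTop two_ne_zero).atTop_div_const (by norm_num)
    have hhalf := hsq.eventually (hc.eventually_half_le_seriesMean (hpos 0) (hpos 1))
    obtain ⟨r, hr, hr₀⟩ := (hhalf.and (eventually_gt_atTop 0)).exists
    refine ⟨r, hr₀, ?_⟩
    nlinarith [hμ'.1, hα.1]

/-- For `μ ∈ (−1,1)`, `μ ≠ 0`, the function
`r ↦ (μ + 1/2) + r Φ'(r)/Φ(r)` is increasing on `(0, ∞)` and tends to `μ + 1/2` as
`r → 0⁺`. Consequently, for `μ ∈ (−1, −1/2)` and `α ∈ [0, 1)`, the equation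
`(μ + 1/2) + r Φ'(r)/Φ(r) = α (μ + 1/2)` has exactly one root in `(0, ∞)`. -/
theorem Phi_logderiv_increasing (μ : ℝ) (hμ : μ ∈ Set.Ioo (-1 : ℝ) 1) (hμ0 : μ ≠ 0) :
    StrictMonoOn (fun r : ℝ => (μ + 1 / 2) + r * deriv (PhiR μ) r / PhiR μ r)
      (Set.Ioi (0 : ℝ)) ∧
    Filter.Tendsto (fun r : ℝ => (μ + 1 / 2) + r * deriv (PhiR μ) r / PhiR μ r)
      (nhdsWithin 0 (Set.Ioi (0 : ℝ))) (nhds (μ + 1 / 2)) ∧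
    (∀ α : ℝ, μ ∈ Set.Ioo (-1 : ℝ) (-(1 : ℝ) / 2) → α ∈ Set.Ico (0 : ℝ) 1 →
      ∃! r : ℝ, 0 < r ∧
        (μ + 1 / 2) + r * deriv (PhiR μ) r / PhiR μ r = α * (μ + 1 / 2)) :=
  Phi_logderiv_increasing_general μ hμ
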